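/- arXiv:0712.4185 — 2 statements merged into one kernel-verified Lean document; each statement's English description precedes it below -/
import Mathlib

section
/- In one variable, if μ, ν are functionals with conditionally free convolution data such that C_{(μ,ν)}(z) = α R_ν(z) for a scalar α, where C is determined by C(z(1 + M_ν(z)))·(1 + M_μ(z)) = M_μ(z)·(1 + M_ν(z)) and R_ν is the free cumulant series of ν (satisfying R_ν(z(1+M_ν(z))) = M_ν(z)), then η_μ(z) = α·η_ν(z), i.e., μ = ν^{⊎α} is a Boolean convolution power of ν. -/
open PowerSeries

/-- Formal composition `F(V)` of power series, valid when `V` has zero constant term. -/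
noncomputable def pcomp (F V : PowerSeries ℂ) : PowerSeries ℂ :=
  PowerSeries.mk fun n =>
    ∑ k ∈ Finset.range (n + 1), PowerSeries.coeff k F * PowerSeries.coeff n (V ^ k)

/-!
Composing `C_{(μ,ν)} = α R_ν` with `z (1 + M_ν)` and using the defining equation of `R_ν`
turns the equation for `C_{(μ,ν)}` into `α M_ν (1 + M_μ) = M_μ (1 + M_ν)`. Dividing by the
invertible series `(1 + M_μ)(1 + M_ν)` gives `η_μ = α η_ν`.
-/

lemma pcomp_smul (c : ℂ) (F V : PowerSeries ℂ) :
    pcomp (c • F) V = c • pcomp F V := by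
  ext n
  simp [pcomp, Finset.mul_sum, mul_assoc]

lemma constantCoeff_one_add_ne_zero {k : Type*} [Field k] {φ : k⟦X⟧}
    (hφ : constantCoeff φ = 0) : constantCoeff (1 + φ) ≠ 0 := by
  simp [hφ]

lemma mul_one_add_inv_eq_of_mul_one_add_eq {k : Type*} [Field k] {φ ψ χ : k⟦X⟧}
    (hφ : constantCoeff φ = 0) (hψ : constantCoeff ψ = 0)
    (h : χ * (1 + φ) = φ * (1 + ψ)) :
    φ * (1 + φ)⁻¹ = χ * (1 + ψ)⁻¹ := by
  rw [PowerSeries.eq_mul_inv_iff_mul_eq (constantCoeff_one_add_ne_zero hψ), mul_right_comm, ← h,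
    mul_assoc, PowerSeries.mul_inv_cancel _ (constantCoeff_one_add_ne_zero hφ), mul_one]

theorem stmt_17_general (α : ℂ) (Mμ Mν Rν Cs : PowerSeries ℂ)
    (hMμ0 : PowerSeries.constantCoeff Mμ = 0)
    (hMν0 : PowerSeries.constantCoeff Mν = 0)
    (hR : pcomp Rν (PowerSeries.X * (1 + Mν)) = Mν)
    (hC : pcomp Cs (PowerSeries.X * (1 + Mν)) * (1 + Mμ) = Mμ * (1 + Mν))
    (hCα : Cs = α • Rν) :
    Mμ * (1 + Mμ)⁻¹ = α • (Mν * (1 + Mν)⁻¹) := by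
  rw [hCα, pcomp_smul, hR] at hC
  rw [← smul_mul_assoc]
  exact mul_one_add_inv_eq_of_mul_one_add_eq hMμ0 hMν0 hC

/-- Conditionally free convolution data with `C_{(μ,ν)} = α R_ν` forces
`η_μ = α η_ν`, i.e. `μ = ν^{⊎α}` is a Boolean convolution power of `ν`. -/
theorem stmt_17 (α : ℂ) (Mμ Mν Rν Cs : PowerSeries ℂ)
    (hMμ0 : PowerSeries.constantCoeff Mμ = 0)
    (hMν0 : PowerSeries.constantCoeff Mν = 0)
    (hRν0 : PowerSeries.constantCoeff Rν = 0)
    (hC0 : PowerSeries.constantCoeff Cs = 0)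
    (hR : pcomp Rν (PowerSeries.X * (1 + Mν)) = Mν)
    (hC : pcomp Cs (PowerSeries.X * (1 + Mν)) * (1 + Mμ) = Mμ * (1 + Mν))
    (hCα : Cs = α • Rν) :
    Mμ * (1 + Mμ)⁻¹ = α • (Mν * (1 + Mν)⁻¹) :=
  stmt_17_general α Mμ Mν Rν Cs hMμ0 hMν0 hR hC hCα
end

section
/- For the one-dimensional free Meixner family φ_{c,b} and the Belinschi–Nica transformation B_t(μ) = (μ^{⊞(1+t)})^{⊎(1/(1+t))}, one has on the level of Jacobi parameters: if μ has Jacobi parameters β = (0, b, b, b, ...), γ = (1, 1+c, 1+c, ...), then B_t(μ) has Jacobi parameters β = (0, b, b, ...), γ = (1, 1+t+c, 1+t+c, ...); in particular B_t(φ_{c,b}) = φ_{c+t,b}. -/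
/-!
With constant tail parameters the continued fraction of the Jacobi parameters `(0, b, b, …)`,
`(1, a, a, …)` is determined by its tail `G`, and `η = X² G` is characterised by
`η = X² + b X η + a η²`. If `w = 1 + s S` and `u = S / w`, then
`S = (X w)² + b (X w) S + c S²` holds exactly when `u` solves that quadratic with `a = s + c`.
For `s = 1`, `S = M`, `w = 1 + M` this turns the continued fraction of `φ_{c,b}` into
`R = X² + b X R + c R²` for its free cumulant series, since composition with `X (1 + M)` is
injective. Substituting `X (1 + M₂)` into that equation and taking `s = 1 + t` shows that
`u = (1 + t)⁻¹ η₂` solves the quadratic with `a = 1 + t + c`.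
-/

open PowerSeries

theorem pcomp_eq_subst {V : ℂ⟦X⟧} (hV : constantCoeff V = 0) (F : ℂ⟦X⟧) :
    pcomp F V = F.subst V := by
  ext n
  rw [pcomp, coeff_mk, coeff_subst' (HasSubst.of_constantCoeff_zero' hV)]
  refine (finsum_eq_sum_of_support_subset _ fun k hk => ?_).symm
  simp only [Function.mem_support, Finset.coe_range, Set.mem_Iio] at hk ⊢
  by_contra hnk
  exact hk (mul_eq_zero_of_right _ <| X_pow_dvd_iff.mp
    (pow_dvd_pow_of_dvd (X_dvd_iff.mpr hV) k) n (by omega))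

namespace PowerSeries

variable {R : Type*} [CommRing R]

theorem subst_injective {V : R⟦X⟧} (hV : constantCoeff V = 0) (hV₁ : IsUnit (coeff 1 V)) :
    Function.Injective (subst V : R⟦X⟧ → R⟦X⟧) := by
  refine Function.LeftInverse.injective (g := subst (V.substInvOfIsUnit hV₁)) fun F => ?_
  rw [subst_comp_subst_apply (HasSubst.of_constantCoeff_zero' hV)
    (HasSubst.substInvOfIsUnit V hV₁), subst_substInvOfIsUnit_right V hV hV₁, X_subst]

theorem eq_of_forall_X_pow_dvd_sub {f g : R⟦X⟧} (h : ∀ n, X ^ n ∣ f - g) : f = g := by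
  ext n
  rw [← sub_eq_zero, ← map_sub]
  exact X_pow_dvd_iff.mp (h (n + 1)) n n.lt_succ_self

/-- `F k` is the `k`-th tail `1 / (1 - β k X - γ k X² / (1 - β (k+1) X - …))` of the continued
fraction of the moment series with Jacobi parameters `β`, `γ`. -/
def IsJacobiCF (β γ : ℕ → R) (F : ℕ → R⟦X⟧) : Prop :=
  ∀ k, F k * (1 - C (β k) * X - C (γ k) * X ^ 2 * F (k + 1)) = 1

theorem IsJacobiCF.apply_eq_apply_zero {b a : R} {T : ℕ → R⟦X⟧}
    (hT : IsJacobiCF (fun _ => b) (fun _ => a) T) (k : ℕ) : T k = T 0 := by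
  have hrec : ∀ k, T (k + 1) - T k =
      X * (C b * (T (k + 1) - T k) + X * (C a * T (k + 1) * (T (k + 2) - T k))) := fun k => by
    linear_combination hT (k + 1) - hT k
  have hdvd : ∀ n k, X ^ n ∣ T (k + 1) - T k := by
    intro n
    induction n with
    | zero => simp
    | succ n ih =>
      intro k
      have h₂ : X ^ n ∣ T (k + 2) - T k := by simpa using dvd_add (ih (k + 1)) (ih k)
      rw [hrec k, pow_succ']
      exact mul_dvd_mul_left X <| dvd_add (dvd_mul_of_dvd_right (ih k) _)
        (dvd_mul_of_dvd_right (dvd_mul_of_dvd_right h₂ _) _)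
  induction k with
  | zero => rfl
  | succ k ih => rw [← ih]; exact eq_of_forall_X_pow_dvd_sub fun n => hdvd n k

theorem isJacobiCF_const_tail_iff {b a : R} {F : ℕ → R⟦X⟧} :
    IsJacobiCF (fun k => if k = 0 then 0 else b) (fun k => if k = 0 then 1 else a) F ↔
      (∀ k, F (k + 1) = F 1) ∧ F 0 * (1 - X ^ 2 * F 1) = 1 ∧
        F 1 * (1 - C b * X - C a * X ^ 2 * F 1) = 1 := by
  constructor
  · intro hF
    have htail : ∀ k, F (k + 1) = F 1 :=
      IsJacobiCF.apply_eq_apply_zero (T := fun k => F (k + 1)) fun k => by simpa using hF (k + 1)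
    refine ⟨htail, by simpa using hF 0, ?_⟩
    simpa [htail 1] using hF 1
  · rintro ⟨htail, hF₀, hG⟩ (_ | k)
    · simpa using hF₀
    · simpa [htail, htail k] using hG

/-- For `z = X` this is the equation of `η = 1 - 1 / (1 + M)` for the Jacobi parameters
`(0, b, b, …)`, `(1, a, a, …)`, and, with `a = c`, that of the free cumulant series
of `φ_{c,b}`. -/
def MeixnerQuadratic (b a : R) (z f : R⟦X⟧) : Prop :=
  f = z ^ 2 + C b * z * f + C a * f ^ 2

theorem meixnerQuadratic_X_pow_two_mul_iff {b a : R} {G : R⟦X⟧} :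
    MeixnerQuadratic b a X (X ^ 2 * G) ↔ G * (1 - C b * X - C a * X ^ 2 * G) = 1 := by
  rw [MeixnerQuadratic]
  constructor <;> intro h
  · apply X_pow_mul_cancel (k := 2)
    linear_combination h
  · linear_combination X ^ 2 * h

theorem X_pow_two_dvd_of_meixnerQuadratic {b a : R} {f : R⟦X⟧} (h : MeixnerQuadratic b a X f)
    (hf : constantCoeff f = 0) : X ^ 2 ∣ f := by
  have hX : X ∣ f := X_dvd_iff.mpr hf
  rw [h]
  refine dvd_add (dvd_add dvd_rfl ?_) ?_
  · rw [mul_assoc, pow_two]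
    exact dvd_mul_of_dvd_right (mul_dvd_mul_left X hX) _
  · exact dvd_mul_of_dvd_right (pow_dvd_pow_of_dvd hX 2) _

theorem meixnerQuadratic_X_mul_iff {b c s : R} {u w : R⟦X⟧} (hw : IsUnit w)
    (hsw : w = 1 + C s * (u * w)) :
    MeixnerQuadratic b c (X * w) (u * w) ↔ MeixnerQuadratic b (s + c) X u := by
  simp only [MeixnerQuadratic, map_add]
  constructor <;> intro h
  · apply (hw.pow 2).mul_left_cancel
    linear_combination h + u * w * hsw
  · linear_combination w ^ 2 * h - u * w * hsw

theorem meixnerQuadratic_subst_iff {b a : R} {f V : R⟦X⟧} (hV : constantCoeff V = 0)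
    (hV₁ : IsUnit (coeff 1 V)) :
    MeixnerQuadratic b a V (f.subst V) ↔ MeixnerQuadratic b a X f := by
  have hV' := HasSubst.of_constantCoeff_zero' hV
  have : (X ^ 2 + C b * X * f + C a * f ^ 2).subst V =
      V ^ 2 + C b * V * f.subst V + C a * (f.subst V) ^ 2 := by
    simp only [subst_add hV', subst_pow hV', subst_X hV', subst_mul hV', subst_C]
    rfl
  rw [MeixnerQuadratic, MeixnerQuadratic, ← this, (subst_injective hV hV₁).eq_iff]

theorem meixnerQuadratic_of_isJacobiCF {b c : R} {F : ℕ → R⟦X⟧} {r : R⟦X⟧}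
    (hF : IsJacobiCF (fun k => if k = 0 then 0 else b) (fun k => if k = 0 then 1 else 1 + c) F)
    (hr : r.subst (X * F 0) = F 0 - 1) : MeixnerQuadratic b c X r := by
  obtain ⟨-, hF₀, hG⟩ := isJacobiCF_const_tail_iff.mp hF
  have hF₀_unit : IsUnit (F 0) := IsUnit.of_mul_eq_one _ hF₀
  have hV₁ : IsUnit (coeff 1 (X * F 0)) := by
    rw [coeff_succ_X_mul, coeff_zero_eq_constantCoeff_apply]
    exact hF₀_unit.map _
  have hM : MeixnerQuadratic b c (X * F 0) (X ^ 2 * F 1 * F 0) :=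
    (meixnerQuadratic_X_mul_iff (s := 1) hF₀_unit (by rw [map_one]; linear_combination hF₀)).mpr
      (meixnerQuadratic_X_pow_two_mul_iff.mpr hG)
  rw [← meixnerQuadratic_subst_iff (by simp) hV₁, hr]
  convert hM using 1
  linear_combination hF₀

theorem exists_isJacobiCF_of_subst_X_mul {K : Type*} [Field K] {b c s : K} (hs : s ≠ 0)
    {r w : K⟦X⟧} (hr : MeixnerQuadratic b c X r) (hr₀ : constantCoeff r = 0)
    (hw : constantCoeff w ≠ 0) (hrw : s • r.subst (X * w) = w - 1) :
    ∃ F : ℕ → K⟦X⟧,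
      IsJacobiCF (fun k => if k = 0 then 0 else b) (fun k => if k = 0 then 1 else s + c) F ∧
        F 0 = (1 - s⁻¹ • (1 - w⁻¹))⁻¹ := by
  have hW : constantCoeff (X * w) = 0 := by simp
  have hW₁ : IsUnit (coeff 1 (X * w)) := by
    rw [coeff_succ_X_mul, coeff_zero_eq_constantCoeff_apply]
    exact isUnit_iff_ne_zero.mpr hw
  set u : K⟦X⟧ := r.subst (X * w) * w⁻¹
  have huw : u * w = r.subst (X * w) := by
    rw [mul_assoc, PowerSeries.inv_mul_cancel w hw, mul_one]
  have hsw : w = 1 + C s * (u * w) := by rw [huw, ← smul_eq_C_mul, hrw, add_sub_cancel]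
  have hu : MeixnerQuadratic b (s + c) X u := by
    refine (meixnerQuadratic_X_mul_iff (isUnit_iff_constantCoeff.mpr hw.isUnit) hsw).mp ?_
    rw [huw]
    exact (meixnerQuadratic_subst_iff hW hW₁).mpr hr
  have hu₀ : constantCoeff u = 0 := by
    have hS₀ : constantCoeff (r.subst (X * w)) = 0 := constantCoeff_subst_eq_zero hW r hr₀
    rw [map_mul, hS₀, zero_mul]
  obtain ⟨G, hG⟩ := X_pow_two_dvd_of_meixnerQuadratic hu hu₀
  have hη : 1 - w⁻¹ = s • u := by
    rw [smul_eq_C_mul]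
    linear_combination w⁻¹ * hsw + (C s * u - 1) * PowerSeries.mul_inv_cancel w hw
  have hu_eq : s⁻¹ • (1 - w⁻¹) = u := by rw [hη, smul_smul, inv_mul_cancel₀ hs, one_smul]
  refine ⟨fun k => if k = 0 then (1 - u)⁻¹ else G,
    isJacobiCF_const_tail_iff.mpr ⟨fun k => rfl, ?_, ?_⟩, by rw [hu_eq]; rfl⟩
  · show (1 - u)⁻¹ * (1 - X ^ 2 * G) = 1
    rw [← hG]
    exact PowerSeries.inv_mul_cancel _ (by simp [hu₀])
  · rw [hG] at hu
    exact meixnerQuadratic_X_pow_two_mul_iff.mp hu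

end PowerSeries

/-- `F 0` is the moment series `1 + M` of `φ_{c,b}`, `R` its free cumulant series and `1 + M₂`
the moment series of `μ^{⊞(1+t)}`. -/
theorem stmt_19 (b c : ℂ) (t : ℝ) (ht : 0 ≤ t) (F : ℕ → PowerSeries ℂ)
    (hF : ∀ k, F k * (1 - PowerSeries.C (if k = 0 then 0 else b) * PowerSeries.X
        - PowerSeries.C (if k = 0 then 1 else 1 + c) * PowerSeries.X ^ 2 * F (k + 1)) = 1)
    (R M₂ : PowerSeries ℂ)
    (hR0 : PowerSeries.constantCoeff R = 0)
    (hM₂0 : PowerSeries.constantCoeff M₂ = 0)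
    (hR : pcomp R (PowerSeries.X * F 0) = F 0 - 1)
    (hR2 : pcomp ((1 + (t : ℂ)) • R) (PowerSeries.X * (1 + M₂)) = M₂) :
    ∃ F' : ℕ → PowerSeries ℂ,
      (∀ k, F' k * (1 - PowerSeries.C (if k = 0 then 0 else b) * PowerSeries.X
          - PowerSeries.C (if k = 0 then 1 else 1 + (t : ℂ) + c) * PowerSeries.X ^ 2
            * F' (k + 1)) = 1) ∧
      F' 0 = (1 - (1 + (t : ℂ))⁻¹ • (1 - (1 + M₂)⁻¹))⁻¹ := by
  have hs : (1 + t : ℂ) ≠ 0 := mod_cast (by positivity : (0 : ℝ) < 1 + t).ne'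
  have hV : constantCoeff (X * F 0) = 0 := by simp
  have hW : constantCoeff (X * (1 + M₂)) = 0 := by simp
  have hRq : MeixnerQuadratic b c X R :=
    meixnerQuadratic_of_isJacobiCF hF (by rwa [← pcomp_eq_subst hV])
  refine exists_isJacobiCF_of_subst_X_mul hs hRq hR0 (by simp [hM₂0]) ?_
  rw [← subst_smul (HasSubst.of_constantCoeff_zero' hW), ← pcomp_eq_subst hW, hR2,
    add_sub_cancel_left]
end
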